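/- arXiv:2002.00781 — 3 statements merged into one kernel-verified Lean document; each statement's English description precedes it below -/
import Mathlib

section
/- Let G be a finite group, α a finite index set, and (G_a)_{a∈α} a family of subgroups of G. The pushforward of the uniform PMF on G under the map g ↦ (gG_a)_{a∈α} is the uniform distribution on its support, i.e., on the image set {(gG_a)_{a∈α} : g ∈ G} ⊆ ∏_{a∈α} G⧸G_a (quasi-uniformity of group characterizable random variables). -/
/-!
The coset tuple map `g ↦ (g G_a)_a` is the orbit map `g ↦ g • (G_a)_a` of the action of `G` on
`∏ a, G ⧸ G_a`, so its image is an orbit. Each fibre is a left coset of the stabilizer, hence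
every point of the orbit has mass `|Stab| / |G|`, which is `1 / |orbit|` by orbit–stabilizer.
-/

open scoped ENNReal

open MulAction

theorem PMF.map_uniformOfFintype_apply {α β : Type*} [Fintype α] [Nonempty α] (f : α → β)
    (b : β) : (PMF.uniformOfFintype α).map f b = Nat.card (f ⁻¹' {b}) / Nat.card α := by
  classical
  rw [← PMF.toOuterMeasure_apply_singleton, PMF.toOuterMeasure_map_apply,
    PMF.toOuterMeasure_uniformOfFintype_apply, Nat.card_eq_fintype_card,
    Nat.card_eq_fintype_card]

section OrbitMap

variable {G X : Type*} [Group G] [MulAction G X]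

theorem MulAction.card_preimage_smul_eq_card_stabilizer (x : X) {y : X} (hy : y ∈ orbit G x) :
    Nat.card ((· • x : G → X) ⁻¹' {y}) = Nat.card (stabilizer G x) := by
  obtain ⟨g₀, rfl⟩ := hy
  refine Nat.card_congr ((Equiv.mulLeft g₀⁻¹).subtypeEquiv fun g => ?_)
  simp [mem_stabilizer_iff, mul_smul, inv_smul_eq_iff]

variable [Fintype G]

theorem PMF.map_uniformOfFintype_smul_apply_of_mem (x : X) {y : X} (hy : y ∈ orbit G x) :
    (PMF.uniformOfFintype G).map (· • x) y = (Nat.card (orbit G x) : ℝ≥0∞)⁻¹ := by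
  have orbit_stabilizer : Nat.card G = Nat.card (orbit G x) * Nat.card (stabilizer G x) := by
    rw [← Nat.card_prod, Nat.card_congr (orbitProdStabilizerEquivGroup G x)]
  have hstab : (Nat.card (stabilizer G x) : ℝ≥0∞) ≠ 0 := by exact_mod_cast Nat.card_pos.ne'
  rw [PMF.map_uniformOfFintype_apply, card_preimage_smul_eq_card_stabilizer x hy,
    orbit_stabilizer, Nat.cast_mul, ENNReal.div_eq_inv_mul,
    ENNReal.mul_inv (.inr (ENNReal.natCast_ne_top _)) (.inr hstab), mul_assoc,
    ENNReal.inv_mul_cancel hstab (ENNReal.natCast_ne_top _), mul_one]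

theorem PMF.map_uniformOfFintype_smul_apply_of_notMem (x : X) {y : X} (hy : y ∉ orbit G x) :
    (PMF.uniformOfFintype G).map (· • x) y = 0 := by
  rw [PMF.apply_eq_zero_iff, PMF.support_map, PMF.support_uniformOfFintype]
  simpa [orbit] using hy

end OrbitMap

theorem QuotientGroup.mk_pi_eq_smul_one {G α : Type*} [Group G] (Gs : α → Subgroup G) (g : G) :
    (fun a => (g : G ⧸ Gs a)) = g • fun a => ((1 : G) : G ⧸ Gs a) := by
  funext a
  rw [Pi.smul_apply, MulAction.Quotient.smul_coe, smul_eq_mul, mul_one]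

theorem pmf_map_coset_tuple_quasi_uniform_general
    (G : Type*) [Group G] [Fintype G] (α : Type*) (Gs : α → Subgroup G) :
    (∀ x ∈ Set.range (fun g : G => fun a => (QuotientGroup.mk g : G ⧸ Gs a)),
        PMF.map (fun g : G => fun a => (QuotientGroup.mk g : G ⧸ Gs a))
          (PMF.uniformOfFintype G) x
        = ((Nat.card (Set.range
            (fun g : G => fun a => (QuotientGroup.mk g : G ⧸ Gs a))) : ℝ≥0∞))⁻¹) ∧
    (∀ x ∉ Set.range (fun g : G => fun a => (QuotientGroup.mk g : G ⧸ Gs a)),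
        PMF.map (fun g : G => fun a => (QuotientGroup.mk g : G ⧸ Gs a))
          (PMF.uniformOfFintype G) x = 0) := by
  have horbit : (fun g : G => fun a => (QuotientGroup.mk g : G ⧸ Gs a)) =
      (· • fun a => ((1 : G) : G ⧸ Gs a)) :=
    funext (QuotientGroup.mk_pi_eq_smul_one Gs)
  rw [horbit]
  exact ⟨fun _ => PMF.map_uniformOfFintype_smul_apply_of_mem _,
    fun _ => PMF.map_uniformOfFintype_smul_apply_of_notMem _⟩

/-- Quasi-uniformity of group characterizable random variables: the pushforward of the
uniform PMF on a finite group `G` under `g ↦ (g G_a)_{a ∈ α}` is the uniform distribution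
on its support, the image set `{(g G_a)_a : g ∈ G}`. -/
theorem pmf_map_coset_tuple_quasi_uniform
    (G : Type*) [Group G] [Fintype G] (α : Type*) [Fintype α] (Gs : α → Subgroup G) :
    (∀ x ∈ Set.range (fun g : G => fun a => (QuotientGroup.mk g : G ⧸ Gs a)),
        PMF.map (fun g : G => fun a => (QuotientGroup.mk g : G ⧸ Gs a))
          (PMF.uniformOfFintype G) x
        = ((Nat.card (Set.range
            (fun g : G => fun a => (QuotientGroup.mk g : G ⧸ Gs a))) : ℝ≥0∞))⁻¹) ∧
    (∀ x ∉ Set.range (fun g : G => fun a => (QuotientGroup.mk g : G ⧸ Gs a)),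
        PMF.map (fun g : G => fun a => (QuotientGroup.mk g : G ⧸ Gs a))
          (PMF.uniformOfFintype G) x = 0) :=
  pmf_map_coset_tuple_quasi_uniform_general G α Gs
end

section
/- Let G be a finite group with subgroups G_1, …, G_n. If [G : ⋂_{i=1}^n G_i] = ∏_{i=1}^n [G : G_i], then for every choice of elements a_1, …, a_n ∈ G the intersection of left cosets ⋂_{i=1}^n a_i G_i is nonempty. -/
open scoped Pointwise

/-- If `[G : ⋂ i, G_i] = ∏ i, [G : G_i]` for subgroups `G_1, …, G_n` of a finite group `G`,
then every tuple of left cosets `(a_1 G_1, …, a_n G_n)` has nonempty intersection. -/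
theorem coset_inter_nonempty_of_index_eq_prod
    {n : ℕ} (G : Type*) [Group G] [Fintype G] (Gs : Fin n → Subgroup G)
    (h : (⨅ i, Gs i).index = ∏ i, (Gs i).index) :
    ∀ a : Fin n → G, (⋂ i, (a i) • (Gs i : Set G)).Nonempty := by
  intro a
  set K := ⨅ i, Gs i with hK
  let f : G ⧸ K → ∀ i, G ⧸ Gs i := fun x =>
    Quotient.liftOn' x (fun g i => QuotientGroup.mk g) (by
      intro g₁ g₂ hg
      funext i
      have hg' : g₁⁻¹ * g₂ ∈ K := QuotientGroup.leftRel_apply.mp hg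
      exact Quotient.sound' (QuotientGroup.leftRel_apply.mpr
        ((Subgroup.mem_iInf.mp hg') i)))
  have hinj : Function.Injective f := by
    intro x y hxy
    induction x using Quotient.inductionOn'
    induction y using Quotient.inductionOn'
    rename_i g₁ g₂
    refine Quotient.sound' (QuotientGroup.leftRel_apply.mpr ?_)
    refine Subgroup.mem_iInf.mpr fun i => ?_
    have := congrFun hxy i
    exact QuotientGroup.leftRel_apply.mp (Quotient.exact' this)
  have hcard : Nat.card (G ⧸ K) = Nat.card (∀ i, G ⧸ Gs i) := by
    rw [Nat.card_pi]
    simpa [Subgroup.index] using h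
  have hbij : Function.Bijective f :=
    (Nat.bijective_iff_injective_and_card f).mpr ⟨hinj, hcard⟩
  obtain ⟨x, hx⟩ := hbij.surjective (fun i => QuotientGroup.mk (a i))
  induction x using Quotient.inductionOn'
  rename_i g
  refine ⟨g, Set.mem_iInter.mpr fun i => ?_⟩
  have := congrFun hx i
  have hmem : (a i)⁻¹ * g ∈ Gs i := by
    have h1 : g⁻¹ * a i ∈ Gs i := QuotientGroup.leftRel_apply.mp (Quotient.exact' this)
    simpa using (Gs i).inv_mem h1
  exact ⟨(a i)⁻¹ * g, hmem, by simp [smul_eq_mul, mul_inv_cancel_left]⟩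
end

section
/- Let G be a finite abelian group with subgroups G_1, …, G_n and G_e such that ⋂_{i=1}^n G_i = {1} and |G| = ∏_{i=1}^n [G : G_i]. Then there exists a group homomorphism φ : ∏_{i=1}^n G⧸G_i → G⧸G_e such that φ(gG_1, …, gG_n) = gG_e for every g ∈ G. (Here each G⧸G_i and G⧸G_e carries the quotient group structure, which exists since G is abelian.) -/
/-! The diagonal map `G →* ∏ i, G ⧸ G_i` has kernel `⋂ i, G_i = {1}`, so it is injective, and
the index condition says that source and target have the same cardinality. Hence it is an
isomorphism, and `φ` is its inverse followed by the projection `G →* G ⧸ G_e`. -/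

open QuotientGroup

@[to_additive]
theorem MonoidHom.ker_pi {ι G : Type*} {M : ι → Type*} [Group G] [∀ i, Group (M i)]
    (f : ∀ i, G →* M i) : (MonoidHom.pi f).ker = ⨅ i, (f i).ker := by
  ext x
  simp only [MonoidHom.mem_ker, Subgroup.mem_iInf, funext_iff, MonoidHom.pi_apply,
    Pi.one_apply]

@[to_additive]
theorem QuotientGroup.ker_pi_mk' {ι G : Type*} [Group G] (H : ι → Subgroup G)
    [∀ i, (H i).Normal] : (MonoidHom.pi fun i => mk' (H i)).ker = ⨅ i, H i := by
  simp only [MonoidHom.ker_pi, ker_mk']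

@[to_additive]
theorem QuotientGroup.bijective_pi_mk'_of_iInf_eq_bot {ι G : Type*} [Fintype ι] [Group G]
    [Finite G] (H : ι → Subgroup G) [∀ i, (H i).Normal] (hbot : ⨅ i, H i = ⊥)
    (hcard : Nat.card G = ∏ i, (H i).index) :
    Function.Bijective (MonoidHom.pi fun i => mk' (H i)) := by
  have hinj : Function.Injective (MonoidHom.pi fun i => mk' (H i)) := by
    rw [← MonoidHom.ker_eq_bot_iff, ker_pi_mk', hbot]
  refine (Nat.bijective_iff_injective_and_card _).mpr ⟨hinj, ?_⟩
  simp only [hcard, Nat.card_pi, Subgroup.index_eq_card]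

/-- For a finite abelian group `G` with subgroups `G_1, …, G_n, G_e` such that
`⋂ i, G_i = {1}` and `|G| = ∏ i, [G : G_i]`, there exists a group homomorphism
`φ : ∏ i, G ⧸ G_i →* G ⧸ G_e` with `φ (g G_1, …, g G_n) = g G_e` for all `g ∈ G`. -/
theorem exists_hom_pi_quotient_to_quotient
    {n : ℕ} (G : Type*) [CommGroup G] [Fintype G] (Gs : Fin n → Subgroup G)
    (Ge : Subgroup G)
    (h₁ : (⨅ i, Gs i) = ⊥) (h₂ : Nat.card G = ∏ i, (Gs i).index) :
    ∃ φ : (∀ i, G ⧸ Gs i) →* G ⧸ Ge,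
      ∀ g : G, φ (fun i => QuotientGroup.mk g) = QuotientGroup.mk g := by
  let e := MulEquiv.ofBijective _ (bijective_pi_mk'_of_iInf_eq_bot Gs h₁ h₂)
  refine ⟨(mk' Ge).comp e.symm.toMonoidHom, fun g => ?_⟩
  have hg : e.symm (fun i => (g : G ⧸ Gs i)) = g := e.symm_apply_eq.mpr rfl
  simp only [MonoidHom.coe_comp, Function.comp_apply, MulEquiv.coe_toMonoidHom, hg, mk'_apply]
end
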